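/- Let $t \geq 1$, $S = \{2^0, \ldots, 2^{t-1}\}$, $\tau = 2^t - 1$, and let $t' < t$. Then for every function $y : \{1,\ldots,t'\} \to S$ and every function $f : \{1,\ldots,t\} \to \{1,\ldots,t'\}$, the sum $\sum_{c=1}^{t} y(f(c))$ is not divisible by $\tau$. -/

import Mathlib

/-!
Write the sum as `∑ 2 ^ m` over the multiset `M` of exponents, each `< t`. Modulo `2 ^ t - 1` a
repeated exponent can be carried: `2 ^ a + 2 ^ a = 2 ^ (a + 1) ≡ 2 ^ ((a + 1) % t)`, which keeps
the residue and shortens `M` by one. Since `f` is not injective, `M` has a repeat, so carrying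
until no repeat is left yields a nonempty multiset without repeats and with fewer than `t` elements, i.e. a proper nonempty subset of `{0, …, t - 1}`. Its power sum lies strictly
between `0` and `2 ^ t - 1`, so it is not divisible by `2 ^ t - 1`.
-/

theorem Nat.two_pow_modEq_two_pow_mod (n t : ℕ) : 2 ^ n ≡ 2 ^ (n % t) [MOD 2 ^ t - 1] := by
  have h : 2 ^ t ≡ 1 [MOD 2 ^ t - 1] := Nat.modEq_sub Nat.one_le_two_pow
  calc 2 ^ n = (2 ^ t) ^ (n / t) * 2 ^ (n % t) := by rw [← pow_mul, ← pow_add, Nat.div_add_mod]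
    _ ≡ 1 ^ (n / t) * 2 ^ (n % t) [MOD 2 ^ t - 1] := (h.pow _).mul_right _
    _ = 2 ^ (n % t) := by rw [one_pow, one_mul]

theorem Finset.eq_range_of_dvd_sum_two_pow {t : ℕ} {s : Finset ℕ} (hs : s.Nonempty)
    (hlt : ∀ k ∈ s, k < t) (hdvd : 2 ^ t - 1 ∣ ∑ k ∈ s, 2 ^ k) : s = Finset.range t := by
  have hpos : 0 < ∑ k ∈ s, 2 ^ k := Finset.sum_pos (fun _ _ => by positivity) hs
  have hlt_pow : ∑ k ∈ s, 2 ^ k < 2 ^ t := Nat.geomSum_lt le_rfl hlt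
  have hrange : ∑ k ∈ Finset.range t, 2 ^ k = 2 ^ t - 1 := by simpa using Nat.geomSum_eq le_rfl t
  apply Finset.geomSum_injective le_rfl
  have := Nat.le_of_dvd hpos hdvd
  simp only [hrange]
  omega

namespace Multiset

variable {t : ℕ} {M : Multiset ℕ}

theorem exists_carry_of_not_nodup (hlt : ∀ m ∈ M, m < t) (hM : ¬M.Nodup) :
    ∃ N : Multiset ℕ, N ≠ 0 ∧ card N + 1 = card M ∧ (∀ m ∈ N, m < t) ∧
      (N.map (2 ^ ·)).sum ≡ (M.map (2 ^ ·)).sum [MOD 2 ^ t - 1] := by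
  obtain ⟨a, u, rfl⟩ : ∃ a u, M = a ::ₘ a ::ₘ u := by simpa [nodup_iff_ne_cons_cons] using hM
  have ht : 0 < t := Nat.zero_lt_of_lt (hlt a (mem_cons_self _ _))
  refine ⟨(a + 1) % t ::ₘ u, cons_ne_zero, by simp, ?_, ?_⟩
  · intro m hm
    rcases mem_cons.1 hm with rfl | hm
    · exact Nat.mod_lt _ ht
    · exact hlt m (by simp [hm])
  · simp only [map_cons, sum_cons]
    rw [← add_assoc, ← two_mul, ← pow_succ']
    exact (Nat.two_pow_modEq_two_pow_mod _ _).symm.add_right _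

theorem not_dvd_sum_two_pow_of_card_lt {M : Multiset ℕ} (hM : M ≠ 0) (hlt : ∀ m ∈ M, m < t)
    (hcard : card M < t) : ¬2 ^ t - 1 ∣ (M.map (2 ^ ·)).sum := by
  by_cases hnd : M.Nodup
  · intro hdvd
    have hs := Finset.eq_range_of_dvd_sum_two_pow (s := ⟨M, hnd⟩) (Finset.nonempty_mk.2 hM) hlt hdvd
    exact hcard.ne (by simpa using congrArg Finset.card hs)
  · obtain ⟨N, hN, hNcard, hNlt, hmod⟩ := exists_carry_of_not_nodup hlt hnd
    rw [← hmod.dvd_iff dvd_rfl]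
    exact not_dvd_sum_two_pow_of_card_lt hN hNlt (by omega)
termination_by card M

theorem not_dvd_sum_two_pow_of_not_nodup (hlt : ∀ m ∈ M, m < t) (hcard : card M ≤ t)
    (hM : ¬M.Nodup) : ¬2 ^ t - 1 ∣ (M.map (2 ^ ·)).sum := by
  obtain ⟨N, hN, hNcard, hNlt, hmod⟩ := exists_carry_of_not_nodup hlt hM
  rw [← hmod.dvd_iff dvd_rfl]
  exact not_dvd_sum_two_pow_of_card_lt hN hNlt (by omega)

end Multiset

/-- With `S = {2^0, …, 2^{t-1}}`, `τ = 2^t - 1` and `t' < t`, for every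
`y : {1,…,t'} → S` and every `f : {1,…,t} → {1,…,t'}`, the sum `∑_c y(f(c))` is not
divisible by `τ`. -/
theorem stmt5 (t t' : ℕ) (h : t' < t) (y : Fin t' → ℕ)
    (hy : ∀ i, y i ∈ (Finset.range t).image (2 ^ ·)) (f : Fin t → Fin t') :
    ¬ (2 ^ t - 1 ∣ ∑ c : Fin t, y (f c)) := by
  choose e he_lt he_eq using fun i => Finset.mem_image.mp (hy i)
  set M : Multiset ℕ := Finset.univ.val.map (e ∘ f)
  have hsum : ∑ c, y (f c) = (M.map (2 ^ ·)).sum := by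
    simp [M, Finset.sum_eq_multiset_sum, Function.comp_def, he_eq]
  have hM : ¬M.Nodup := fun hnd => h.not_ge <| by
    simpa using Fintype.card_le_of_injective f
      (Set.injOn_univ.1 (by simpa using Finset.nodup_map_iff_injOn.1 hnd)).of_comp
  rw [hsum]
  exact Multiset.not_dvd_sum_two_pow_of_not_nodup
    (by simpa [M] using fun c => Finset.mem_range.1 (he_lt (f c))) (by simp [M]) hM
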